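/- For every terminating SRTM M over a commutative semiring R with oracle access to LimRec(R), there exists a terminating SRTM M' over R with oracle access to LimRec(R) such that ‖M'‖ = ‖M‖, the computation path lengths of M' are polynomially bounded whenever those of M are, and for all states q, q' of M', all tape symbols σ, σ' and each d ∈ {−1, 1}, there is at most one label w with ((q, σ), (q', σ'), d, w) in the transition relation of M'. -/

import Mathlib

open scoped Classical


open Classical in
/-- The limited recognition function `rec_{R''}` for a (finite) set `R'' ⊆ R`. -/
noncomputable def limRecFun {R : Type} [CommSemiring R] (S : Set R) (x : R) : R :=
  if x ∈ S then ∑ᶠ r ∈ S, r else x + ∑ᶠ r ∈ S, r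

/-- Labels of transitions of an SRTM with oracle access to `LimRec(R)`:
a fixed weight, the placeholder `X`, or a limited recognition oracle. -/
inductive OLabel (R : Type) : Type where
  | const : R → OLabel R
  | ph : OLabel R
  | orac : Set R → OLabel R

/-- An SRTM over `R` with oracle access to `LimRec(R)`: exactly like an SRTM,
but transition labels come from `R' ∪ {X} ∪ LimRec(R)`. -/
structure OSRTM (R : Type) (A : Type) where
  nQ : ℕ
  nE : ℕ
  blankE : Fin nE
  phE : Fin nE
  blank_ne_ph : blankE ≠ phE
  start : Fin nQ
  weights : Set R
  weights_fin : weights.Finite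
  trans : Set ((Fin nQ × (A ⊕ Fin nE)) × (Fin nQ × (A ⊕ Fin nE)) × Bool × OLabel R)
  trans_fin : trans.Finite
  trans_wt : ∀ t ∈ trans, ∀ r : R, t.2.2.2 = OLabel.const r → r ∈ weights
  trans_orac : ∀ t ∈ trans, ∀ S : Set R, t.2.2.2 = OLabel.orac S → S.Finite

namespace OSRTM

variable {R A : Type}

abbrev Sym (M : OSRTM R A) : Type := A ⊕ Fin M.nE

abbrev Trans (M : OSRTM R A) : Type :=
  (Fin M.nQ × M.Sym) × (Fin M.nQ × M.Sym) × Bool × OLabel R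

abbrev Config (M : OSRTM R A) : Type := Fin M.nQ × (ℕ → M.Sym × R) × ℕ

def applicable (M : OSRTM R A) (c : M.Config) : Set M.Trans :=
  {t | t ∈ M.trans ∧ t.1.1 = c.1 ∧ t.1.2 = (c.2.1 c.2.2).1}

def stepTo (M : OSRTM R A) (t : M.Trans) (c : M.Config) : M.Config :=
  ⟨t.2.1.1,
    Function.update c.2.1 c.2.2 (t.2.1.2, (c.2.1 c.2.2).2),
    ((c.2.2 : ℤ) + (if t.2.2.1 then 1 else -1)).natAbs⟩

/-- The weight of a transition: a constant, the value under the head, or the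
value of a limited recognition function on the value under the head. -/
noncomputable def wt [CommSemiring R] (M : OSRTM R A) (t : M.Trans) (c : M.Config) : R :=
  match t.2.2.2 with
  | .const r => r
  | .ph => (c.2.1 c.2.2).2
  | .orac S => limRecFun S (c.2.1 c.2.2).2

noncomputable def val [CommSemiring R] (M : OSRTM R A) : ℕ → M.Config → R
  | 0, _ => 1
  | n + 1, c =>
    if M.applicable c = ∅ then 1
    else ∑ᶠ t ∈ M.applicable c, M.wt t c * val M n (M.stepTo t c)

def initTape [Zero R] (M : OSRTM R A) (s : List (A ⊕ R)) : ℕ → M.Sym × R := fun i =>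
  match s[i]? with
  | some (Sum.inl a) => (Sum.inl a, 0)
  | some (Sum.inr r) => (Sum.inr M.phE, r)
  | none => (Sum.inr M.blankE, 0)

def initConfig [Zero R] (M : OSRTM R A) (s : List (A ⊕ R)) : M.Config :=
  ⟨M.start, M.initTape s, 0⟩

def StepRel (M : OSRTM R A) (c c' : M.Config) : Prop :=
  ∃ t ∈ M.applicable c, c' = M.stepTo t c

def PathLen (M : OSRTM R A) : ℕ → M.Config → M.Config → Prop
  | 0, c, c' => c' = c
  | n + 1, c, c'' => ∃ c', StepRel M c c' ∧ PathLen M n c' c''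

def BoundedBy [Zero R] (M : OSRTM R A) (ℓ : List (A ⊕ R) → ℕ) : Prop :=
  ∀ (s : List (A ⊕ R)) (n : ℕ) (c : M.Config),
    PathLen M n (M.initConfig s) c → n ≤ ℓ s

def Terminating [Zero R] (M : OSRTM R A) : Prop := ∃ ℓ, M.BoundedBy ℓ

noncomputable def output [CommSemiring R] (M : OSRTM R A)
    (ℓ : List (A ⊕ R) → ℕ) (s : List (A ⊕ R)) : R :=
  val M (ℓ s) (M.initConfig s)

end OSRTM

/-- `NP_new(R)^{LimRec(R)}`: functions computed by terminating SRTMs over `R`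
with oracle access to `LimRec(R)` and polynomially bounded path lengths. -/
def NPnewO (R : Type) [CommSemiring R] (A : Type) [Fintype A]
    (f : List (A ⊕ R) → R) : Prop :=
  ∃ (M : OSRTM R A) (ℓ : List (A ⊕ R) → ℕ) (p : Polynomial ℕ),
    M.BoundedBy ℓ ∧ (∀ s, ℓ s ≤ p.eval s.length) ∧ ∀ s, f s = M.output ℓ s

/-!
Tag every state with the index of the transition that entered it. In the tagged machine the target
state of a transition already determines the transition, hence its label. Forgetting the tags maps
the transitions applicable at a tagged configuration bijectively and weight-preservingly onto those
applicable at the untagged one, so values and computation paths, hence path length bounds, are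
unchanged.
-/

namespace OSRTM

variable {R A : Type}

section Simulation

variable {M N : OSRTM R A}

theorem pathLen_map (π : N.Config → M.Config) (lift : N.Config → M.Trans → N.Trans)
    (happ : ∀ c, N.applicable c = lift c '' M.applicable (π c))
    (hstep : ∀ c t, π (N.stepTo (lift c t) c) = M.stepTo t (π c)) :
    ∀ {n : ℕ} {c c' : N.Config}, N.PathLen n c c' → M.PathLen n (π c) (π c')
  | 0, _, _, h => congrArg π h
  | _ + 1, c, _, ⟨_, ⟨_, ht, rfl⟩, hrest⟩ => by
    rw [happ] at ht
    obtain ⟨t, ht, rfl⟩ := ht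
    exact ⟨_, ⟨t, ht, hstep c t⟩, pathLen_map π lift happ hstep hrest⟩

theorem boundedBy_of_map [Zero R] (π : N.Config → M.Config)
    (lift : N.Config → M.Trans → N.Trans)
    (happ : ∀ c, N.applicable c = lift c '' M.applicable (π c))
    (hstep : ∀ c t, π (N.stepTo (lift c t) c) = M.stepTo t (π c))
    (hinit : ∀ s, π (N.initConfig s) = M.initConfig s) {ℓ : List (A ⊕ R) → ℕ}
    (hb : M.BoundedBy ℓ) : N.BoundedBy ℓ := fun s n c h =>
  hb s n (π c) (hinit s ▸ pathLen_map π lift happ hstep h)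

theorem val_map [CommSemiring R] (π : N.Config → M.Config)
    (lift : N.Config → M.Trans → N.Trans)
    (happ : ∀ c, N.applicable c = lift c '' M.applicable (π c))
    (hinj : ∀ c, Set.InjOn (lift c) (M.applicable (π c)))
    (hwt : ∀ c t, N.wt (lift c t) c = M.wt t (π c))
    (hstep : ∀ c t, π (N.stepTo (lift c t) c) = M.stepTo t (π c)) :
    ∀ (n : ℕ) (c : N.Config), N.val n c = M.val n (π c)
  | 0, _ => rfl
  | n + 1, c => by
    simp only [val, happ, Set.image_eq_empty]
    split_ifs
    · rfl
    · rw [finsum_mem_image (hinj c)]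
      refine finsum_mem_congr rfl fun t _ => ?_
      rw [hwt, val_map π lift happ hinj hwt hstep n, hstep]

end Simulation

section Tagged

variable (M : OSRTM R A)

noncomputable abbrev numTags : ℕ := M.trans_fin.toFinset.card + 1

/-- The last tag is the index of no transition of `M`; it is given to the start state. -/
noncomputable def transIndex (t : M.Trans) : Fin M.numTags :=
  if h : t ∈ M.trans then
    (M.trans_fin.toFinset.equivFin ⟨t, M.trans_fin.mem_toFinset.2 h⟩).castSucc
  else Fin.last _

theorem transIndex_injOn : Set.InjOn M.transIndex M.trans := by
  intro t ht t' ht' h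
  simp only [transIndex, dif_pos ht, dif_pos ht', Fin.castSucc_inj,
    Equiv.apply_eq_iff_eq, Subtype.mk.injEq] at h
  exact h

noncomputable def tagEquiv : Fin M.nQ × Fin M.numTags ≃ Fin (M.nQ * M.numTags) :=
  finProdFinEquiv

noncomputable def liftTrans (j : Fin M.numTags) (t : M.Trans) :
    (Fin (M.nQ * M.numTags) × M.Sym) × (Fin (M.nQ * M.numTags) × M.Sym) × Bool × OLabel R :=
  ((M.tagEquiv (t.1.1, j), t.1.2), (M.tagEquiv (t.2.1.1, M.transIndex t), t.2.1.2),
    t.2.2.1, t.2.2.2)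

noncomputable def tagged : OSRTM R A where
  nQ := M.nQ * M.numTags
  nE := M.nE
  blankE := M.blankE
  phE := M.phE
  blank_ne_ph := M.blank_ne_ph
  start := M.tagEquiv (M.start, Fin.last _)
  weights := M.weights
  weights_fin := M.weights_fin
  trans := Set.image2 M.liftTrans Set.univ M.trans
  trans_fin := Set.finite_univ.image2 _ M.trans_fin
  trans_wt := by
    rintro _ ⟨_, -, t, ht, rfl⟩
    exact M.trans_wt t ht
  trans_orac := by
    rintro _ ⟨_, -, t, ht, rfl⟩
    exact M.trans_orac t ht

theorem liftTrans_injOn (j : Fin M.numTags) : Set.InjOn (M.liftTrans j) M.trans :=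
  fun _ ht _ ht' h => M.transIndex_injOn ht ht'
    (congrArg Prod.snd (M.tagEquiv.injective (congrArg (·.2.1.1) h)))

theorem tagged_label_eq_of_target_eq {u u' : M.tagged.Trans} (hu : u ∈ M.tagged.trans)
    (hu' : u' ∈ M.tagged.trans) (h : u.2.1.1 = u'.2.1.1) : u.2.2.2 = u'.2.2.2 := by
  obtain ⟨j, -, t, ht, rfl⟩ := hu
  obtain ⟨j', -, t', ht', rfl⟩ := hu'
  obtain rfl : t = t' := M.transIndex_injOn ht ht'
    (congrArg Prod.snd (M.tagEquiv.injective h))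
  rfl

noncomputable def untag (c : M.tagged.Config) : M.Config := ((M.tagEquiv.symm c.1).1, c.2)

noncomputable def liftAt (c : M.tagged.Config) : M.Trans → M.tagged.Trans :=
  M.liftTrans (M.tagEquiv.symm c.1).2

theorem tagged_applicable (c : M.tagged.Config) :
    M.tagged.applicable c = M.liftAt c '' M.applicable (M.untag c) := by
  ext t'
  constructor
  · rintro ⟨⟨j, -, t, ht, rfl⟩, hq, hσ⟩
    have hqj : (t.1.1, j) = M.tagEquiv.symm c.1 := M.tagEquiv.eq_symm_apply.2 hq
    exact ⟨t, ⟨ht, congrArg Prod.fst hqj, hσ⟩, by rw [liftAt, ← congrArg Prod.snd hqj]⟩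
  · rintro ⟨t, ⟨ht, hq, hσ⟩, rfl⟩
    refine ⟨⟨_, trivial, t, ht, rfl⟩, ?_, hσ⟩
    change M.tagEquiv (t.1.1, _) = c.1
    rw [hq]
    exact M.tagEquiv.apply_symm_apply c.1

theorem untag_stepTo (c : M.tagged.Config) (t : M.Trans) :
    M.untag (M.tagged.stepTo (M.liftAt c t) c) = M.stepTo t (M.untag c) := by
  simp only [untag, stepTo, liftAt, liftTrans, Equiv.symm_apply_apply]
  rfl

theorem tagged_wt [CommSemiring R] (c : M.tagged.Config) (t : M.Trans) :
    M.tagged.wt (M.liftAt c t) c = M.wt t (M.untag c) := by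
  unfold wt
  rfl

theorem untag_initConfig [Zero R] (s : List (A ⊕ R)) :
    M.untag (M.tagged.initConfig s) = M.initConfig s := by
  simp only [untag, initConfig, tagged, Equiv.symm_apply_apply]
  rfl

end Tagged

end OSRTM

theorem OSRTM_normalize_general (R : Type) [CommSemiring R] (A : Type)
    (M : OSRTM R A) (ℓ : List (A ⊕ R) → ℕ) (hb : M.BoundedBy ℓ) :
    ∃ (M' : OSRTM R A) (ℓ' : List (A ⊕ R) → ℕ),
      M'.BoundedBy ℓ' ∧
      (∀ s, M'.output ℓ' s = M.output ℓ s) ∧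
      ((∃ p : Polynomial ℕ, ∀ s, ℓ s ≤ p.eval s.length) →
        ∃ p' : Polynomial ℕ, ∀ s, ℓ' s ≤ p'.eval s.length) ∧
      ∀ (q q' : Fin M'.nQ) (σ σ' : A ⊕ Fin M'.nE) (d : Bool) (w w' : OLabel R),
        ((q, σ), (q', σ'), d, w) ∈ M'.trans →
        ((q, σ), (q', σ'), d, w') ∈ M'.trans → w = w' := by
  refine ⟨M.tagged, ℓ, ?_, fun s => ?_, id, fun q q' σ σ' d w w' h h' =>
    M.tagged_label_eq_of_target_eq h h' rfl⟩
  · exact OSRTM.boundedBy_of_map M.untag M.liftAt M.tagged_applicable M.untag_stepTo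
      M.untag_initConfig hb
  · rw [OSRTM.output, OSRTM.output, ← M.untag_initConfig s]
    exact OSRTM.val_map M.untag M.liftAt M.tagged_applicable
      (fun c => (M.liftTrans_injOn _).mono fun _ ht => ht.1) M.tagged_wt M.untag_stepTo _ _

/-- Every terminating oracle SRTM is equivalent to one which has, for each
`(q, σ, q', σ', d)`, at most one transition label; the transformation preserves
polynomial boundedness of computation path lengths. -/
theorem OSRTM_normalize (R : Type) [CommSemiring R] (A : Type) [Fintype A]
    (M : OSRTM R A) (ℓ : List (A ⊕ R) → ℕ) (hb : M.BoundedBy ℓ) :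
    ∃ (M' : OSRTM R A) (ℓ' : List (A ⊕ R) → ℕ),
      M'.BoundedBy ℓ' ∧
      (∀ s, M'.output ℓ' s = M.output ℓ s) ∧
      ((∃ p : Polynomial ℕ, ∀ s, ℓ s ≤ p.eval s.length) →
        ∃ p' : Polynomial ℕ, ∀ s, ℓ' s ≤ p'.eval s.length) ∧
      ∀ (q q' : Fin M'.nQ) (σ σ' : A ⊕ Fin M'.nE) (d : Bool) (w w' : OLabel R),
        ((q, σ), (q', σ'), d, w) ∈ M'.trans →
        ((q, σ), (q', σ'), d, w') ∈ M'.trans → w = w' :=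
  OSRTM_normalize_general R A M ℓ hb
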